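/- arXiv:2404.02859 — 5 statements merged into one kernel-verified Lean document; each statement's English description precedes it below -/
import Mathlib

section
/- For every τ ∈ (0, 1/100] there exists μ > 0 (of order τ²) such that for every R > 0 and all points A, B, C on the circle ∂B_R ⊂ ℝ² centered at the origin: if D is a point of the closed disk B̄_R minimizing P ↦ |PA| + |PB| + |PC| over B̄_R and |D| ≥ τR, then |DA| + |DB| + |DC| < (3 − μ)R. -/
/-!
Let `g = 3R - (|DA| + |DB| + |DC|)`. Testing the minimality of `D` against `D / 2`, the
strict convexity of the norm gives `∑ (|D|²R² - ⟪D, X⟫²) ≤ 12 R³ g` over `X = A, B, C`; testing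
it against `(A + B + C) / 3` gives `|A + B + C|² ≤ 6 R g`. If `g` were smaller than
`|D|² / (24 R)`, the first bound would make `A`, `B`, `C` nearly collinear with `D`; two of them
then lie on the same side of the line `D⊥`, so `|A + B + C| > R / 2`, contradicting the second.
Hence `g ≥ |D|² / (24 R) ≥ τ² R / 24`.
-/

open MeasureTheory Metric Filter
open scoped RealInnerProductSpace

noncomputable section

/-- Squared Euclidean norm of the full gradient of `u : ℂ → ℂ`
(`|∇u|² = |∂_x u|² + |∂_y u|²`). -/
def gradSq (u : ℂ → ℂ) (z : ℂ) : ℝ :=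
  ‖fderiv ℝ u z 1‖ ^ 2 + ‖fderiv ℝ u z Complex.I‖ ^ 2

/-- The Allen–Cahn energy `E(u,Ω) = ∫_Ω (½|∇u|² + W(u))`. -/
def energy (W : ℂ → ℝ) (u : ℂ → ℂ) (Ω : Set ℂ) : ℝ :=
  ∫ z in Ω, ((1 / 2) * gradSq u z + W (u z))

/-- Minimizing solution in the sense of De Giorgi. -/
def IsMinimizingSolution (W : ℂ → ℝ) (u : ℂ → ℂ) : Prop :=
  ∀ Ω : Set ℂ, IsOpen Ω → Bornology.IsBounded Ω →
    ∀ v : ℂ → ℂ, ContDiff ℝ 1 v → HasCompactSupport v → tsupport v ⊆ Ω →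
      energy W u Ω ≤ energy W (u + v) Ω

/-- Hypothesis (H1) on the triple-well potential. -/
structure H1 (W : ℂ → ℝ) (a : Fin 3 → ℂ) (M c₁ c₂ : ℝ) : Prop where
  smooth : ContDiff ℝ 2 W
  nonneg : ∀ z, 0 ≤ W z
  zeroSet : ∀ z, W z = 0 ↔ ∃ i, z = a i
  inj : Function.Injective a
  coercive : ∀ z : ℂ, M < ‖z‖ → 0 < ⟪gradient W z, z⟫
  c₁pos : 0 < c₁
  c₁lt : c₁ < c₂
  hessLower : ∀ (i : Fin 3) (ξ : ℂ), c₁ * ‖ξ‖ ^ 2 ≤ iteratedFDeriv ℝ 2 W (a i) ![ξ, ξ]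
  hessUpper : ∀ (i : Fin 3) (ξ : ℂ), iteratedFDeriv ℝ 2 W (a i) ![ξ, ξ] ≤ c₂ * ‖ξ‖ ^ 2

/-- The 1D action of a path. -/
def action1D (W : ℂ → ℝ) (U : ℝ → ℂ) : ℝ :=
  ∫ t : ℝ, ((1 / 2) * ‖deriv U t‖ ^ 2 + W (U t))

/-- Actions of 1D connections between two wells. -/
def connectionActions (W : ℂ → ℝ) (p q : ℂ) : Set ℝ :=
  {e | ∃ U : ℝ → ℂ, Differentiable ℝ U ∧
    Tendsto U atBot (nhds p) ∧ Tendsto U atTop (nhds q) ∧ e = action1D W U}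

/-- Hypothesis (H2): all connection actions are minimized, with common minimal value `σ`. -/
structure H2 (W : ℂ → ℝ) (a : Fin 3 → ℂ) (σ : ℝ) : Prop where
  pos : 0 < σ
  least : ∀ i j : Fin 3, i ≠ j → IsLeast (connectionActions W (a i) (a j)) σ

/-- The constants `δ_W, c_W, C_W` from the potential estimate near the wells. -/
structure WellConstants (W : ℂ → ℝ) (a : Fin 3 → ℂ) (δW cW CW : ℝ) : Prop where
  δWpos : 0 < δW
  cWpos : 0 < cW
  cWle : cW ≤ CW
  near : ∀ (i : Fin 3) (u : ℂ), ‖u - a i‖ < δW →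
    (1 / 2) * cW * ‖u - a i‖ ^ 2 ≤ W u ∧ W u ≤ (1 / 2) * CW * ‖u - a i‖ ^ 2
  far : ∀ (δ : ℝ) (u : ℂ), 0 ≤ δ → δ < δW → (∀ i : Fin 3, δ ≤ ‖u - a i‖) →
    (1 / 2) * cW * δ ^ 2 ≤ W u

/-- Line energy (tangential Dirichlet part plus potential, with respect to arclength)
of `u` along the part of the circle of radius `R` parametrized by angles in `s`. -/
def circleEnergyOn (W : ℂ → ℝ) (u : ℂ → ℂ) (R : ℝ) (s : Set ℝ) : ℝ :=
  ∫ θ in s, ((1 / (2 * R)) * ‖deriv (fun t => u (circleMap 0 R t)) θ‖ ^ 2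
    + R * W (u (circleMap 0 R θ)))

/-- Total line energy `∫_{∂B_R} (½|∂_T u|² + W(u)) dH¹` along the circle of radius `R`. -/
def circleEnergy (W : ℂ → ℝ) (u : ℂ → ℂ) (R : ℝ) : ℝ :=
  circleEnergyOn W u R (Set.Ico 0 (2 * Real.pi))

/-- `u` minimizes the energy on `Ω` among (continuous) competitors with its own
boundary values. -/
def MinimizesWithBV (W : ℂ → ℝ) (u : ℂ → ℂ) (Ω : Set ℂ) : Prop :=
  ∀ v : ℂ → ℂ, Continuous v → (∀ z ∉ Ω, v z = u z) → energy W u Ω ≤ energy W v Ω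

/-- An open sector with vertex `p` and aperture angles `(θ₁, θ₂)`. -/
def Sector (p : ℂ) (θ₁ θ₂ : ℝ) : Set ℂ :=
  {z | ∃ r θ : ℝ, 0 < r ∧ θ₁ < θ ∧ θ < θ₂ ∧ z = p + r * Complex.exp (θ * Complex.I)}

/-- A triple junction map centered at `p`: equal to `a k` on the three open sectors with
vertex `p` and opening angle `2π/3`. -/
def IsTripleJunctionMap (a : Fin 3 → ℂ) (p : ℂ) (u₀ : ℂ → ℂ) : Prop :=
  ∃ φ : ℝ, ∀ k : Fin 3,
    ∀ z ∈ Sector p (φ + 2 * Real.pi * ((k : ℕ) : ℝ) / 3)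
        (φ + 2 * Real.pi * (((k : ℕ) : ℝ) + 1) / 3),
      u₀ z = a k

/-- The standing setting: a bounded minimizing solution with energy pinching at scale `R₀`. -/
structure Standing (W : ℂ → ℝ) (a : Fin 3 → ℂ) (σ M ε R₀ : ℝ) (u : ℂ → ℂ) : Prop where
  minimizing : IsMinimizingSolution W u
  diff : Differentiable ℝ u
  bound : ∀ z, ‖u z‖ + Real.sqrt (gradSq u z) ≤ M
  Rpos : 0 < R₀
  circle_lb : 3 * σ - ε ≤ circleEnergy W u R₀
  circle_ub : circleEnergy W u R₀ ≤ 3 * σ + ε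
  bulk_lb : 3 * σ - ε ≤ energy W u (Metric.ball 0 R₀) / R₀
  bulk_ub : energy W u (Metric.ball 0 R₀) / R₀ ≤ 3 * σ + ε

/-- The arc structure on `∂B_{R₀}`: three well arcs `I₁`, `I₂`, `I₃` given in angles by
`[t0,t1]`, `[t2,t3]`, `[t4,t5]`, separated by the transition arcs `I₁₂ = [t1,t2]`,
`I₂₃ = [t3,t4]`, `I₃₁ = [t5, t0+2π]`. -/
structure ArcSetup (a : Fin 3 → ℂ) (δ C₁ C₂ R₀ : ℝ) (u : ℂ → ℂ)
    (t0 t1 t2 t3 t4 t5 : ℝ) : Prop where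
  h01 : t0 < t1
  h12 : t1 < t2
  h23 : t2 < t3
  h34 : t3 < t4
  h45 : t4 < t5
  h50 : t5 < t0 + 2 * Real.pi
  end0l : ‖u (circleMap 0 R₀ t0) - a 0‖ ≤ δ
  end0r : ‖u (circleMap 0 R₀ t1) - a 0‖ ≤ δ
  end1l : ‖u (circleMap 0 R₀ t2) - a 1‖ ≤ δ
  end1r : ‖u (circleMap 0 R₀ t3) - a 1‖ ≤ δ
  end2l : ‖u (circleMap 0 R₀ t4) - a 2‖ ≤ δ
  end2r : ‖u (circleMap 0 R₀ t5) - a 2‖ ≤ δ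
  phase0 : ∀ s ∈ Set.Icc t0 t1, ∀ j : Fin 3, j ≠ 0 → δ < ‖u (circleMap 0 R₀ s) - a j‖
  phase1 : ∀ s ∈ Set.Icc t2 t3, ∀ j : Fin 3, j ≠ 1 → δ < ‖u (circleMap 0 R₀ s) - a j‖
  phase2 : ∀ s ∈ Set.Icc t4 t5, ∀ j : Fin 3, j ≠ 2 → δ < ‖u (circleMap 0 R₀ s) - a j‖
  trans01 : ∀ s ∈ Set.Icc t1 t2, ∀ j : Fin 3, δ < ‖u (circleMap 0 R₀ s) - a j‖
  trans12 : ∀ s ∈ Set.Icc t3 t4, ∀ j : Fin 3, δ < ‖u (circleMap 0 R₀ s) - a j‖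
  trans20 : ∀ s ∈ Set.Icc t5 (t0 + 2 * Real.pi), ∀ j : Fin 3, δ < ‖u (circleMap 0 R₀ s) - a j‖
  meas_lb : C₁ ≤ R₀ * ((t2 - t1) + (t4 - t3) + (t0 + 2 * Real.pi - t5))
  meas_ub : R₀ * ((t2 - t1) + (t4 - t3) + (t0 + 2 * Real.pi - t5)) ≤ C₂ / δ ^ 2

/-- Midpoint of the arc with angles `θ₁ ≤ θ₂` on the circle of radius `R`. -/
def midpt (R θ₁ θ₂ : ℝ) : ℂ := circleMap 0 R ((θ₁ + θ₂) / 2)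

/-- `D` minimizes the total distance to `A`, `B`, `C` over the closed disk of radius `R`. -/
def IsFermatPoint (R : ℝ) (A B C D : ℂ) : Prop :=
  D ∈ Metric.closedBall (0 : ℂ) R ∧
    ∀ P ∈ Metric.closedBall (0 : ℂ) R,
      dist D A + dist D B + dist D C ≤ dist P A + dist P B + dist P C

/-- The tangential derivative of `u` at `z` (along the circle centered at the origin
through `z`). -/
def tangentialDeriv (u : ℂ → ℂ) (z : ℂ) : ℂ :=
  if z = 0 then 0 else ‖z‖⁻¹ • fderiv ℝ u z (Complex.I * z)

/-- Planar cross product of two vectors. -/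
def cross2 (w v : ℂ) : ℝ := w.re * v.im - w.im * v.re

theorem sq_add_sq_add_sq_le_mul_abs_add_add {a b c K : ℝ}
    (ha : |a| ≤ K) (hb : |b| ≤ K) (hc : |c| ≤ K) :
    a ^ 2 + b ^ 2 + c ^ 2 ≤ K * |a + b + c| + 2 * K ^ 2 := by
  rw [abs_le] at ha hb hc
  -- two of `a, b, c` have the same sign
  rcases le_total 0 (a + b + c) with h | h
  · rw [abs_of_nonneg h]
    rcases le_total 0 a with h1 | h1 <;> rcases le_total 0 b with h2 | h2 <;>
      rcases le_total 0 c with h3 | h3 <;> nlinarith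
  · rw [abs_of_nonpos h]
    rcases le_total 0 a with h1 | h1 <;> rcases le_total 0 b with h2 | h2 <;>
      rcases le_total 0 c with h3 | h3 <;> nlinarith

section InnerProductSpace

variable {E : Type*} [SeminormedAddCommGroup E] [InnerProductSpace ℝ E]

theorem norm_sq_mul_norm_sq_sub_inner_sq_le (u v : E) :
    ‖u‖ ^ 2 * ‖v‖ ^ 2 - ⟪u, v⟫ ^ 2 ≤
      ‖u‖ * ‖v‖ * (‖u‖ + ‖v‖ + ‖u + v‖) * (‖u‖ + ‖v‖ - ‖u + v‖) := by
  calc ‖u‖ ^ 2 * ‖v‖ ^ 2 - ⟪u, v⟫ ^ 2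
      ≤ 2 * ‖u‖ * ‖v‖ * (‖u‖ * ‖v‖ - ⟪u, v⟫) := by
        nlinarith [real_inner_le_norm u v, neg_le_of_abs_le (abs_real_inner_le_norm u v)]
    _ = ‖u‖ * ‖v‖ * (‖u‖ + ‖v‖ + ‖u + v‖) * (‖u‖ + ‖v‖ - ‖u + v‖) := by
        linear_combination ‖u‖ * ‖v‖ * norm_add_sq_real u v

theorem norm_sq_mul_sq_sub_inner_sq_le_midpoint_defect {R : ℝ} {D X : E}
    (hD : ‖D‖ ≤ R) (hX : ‖X‖ = R) :
    ‖D‖ ^ 2 * R ^ 2 - ⟪D, X⟫ ^ 2 ≤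
      12 * R ^ 3 * (R + dist D X - 2 * dist ((1 / 2 : ℝ) • D) X) := by
  have hgram : ‖D‖ ^ 2 * R ^ 2 - ⟪D, X⟫ ^ 2 = ‖X - D‖ ^ 2 * ‖X‖ ^ 2 - ⟪X - D, X⟫ ^ 2 := by
    rw [norm_sub_sq_real, inner_sub_left, real_inner_self_eq_norm_sq, real_inner_comm, hX]
    ring
  have hmid : ‖X - D + X‖ = 2 * dist ((1 / 2 : ℝ) • D) X := by
    rw [show X - D + X = (2 : ℝ) • (X - (1 / 2 : ℝ) • D) by module, norm_smul,
      Real.norm_of_nonneg zero_le_two, dist_comm, dist_eq_norm]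
  have hXD : ‖X - D‖ ≤ 2 * R := by linarith [norm_sub_le X D]
  have hsum : ‖X - D + X‖ ≤ 3 * R := by linarith [norm_add_le (X - D) X]
  have hdefect : 0 ≤ ‖X - D‖ + ‖X‖ - ‖X - D + X‖ := by linarith [norm_add_le (X - D) X]
  have hR : 0 ≤ R := hX ▸ norm_nonneg X
  calc ‖D‖ ^ 2 * R ^ 2 - ⟪D, X⟫ ^ 2
      ≤ ‖X - D‖ * ‖X‖ * (‖X - D‖ + ‖X‖ + ‖X - D + X‖) * (‖X - D‖ + ‖X‖ - ‖X - D + X‖) :=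
        hgram ▸ norm_sq_mul_norm_sq_sub_inner_sq_le (X - D) X
    _ ≤ (2 * R) * R * (6 * R) * (‖X - D‖ + ‖X‖ - ‖X - D + X‖) := by
        rw [hX] at hdefect ⊢
        gcongr
        linarith
    _ = 12 * R ^ 3 * (R + dist D X - 2 * dist ((1 / 2 : ℝ) • D) X) := by
        rw [hX, hmid, dist_comm D X, dist_eq_norm X D]
        ring

def distSum (A B C P : E) : ℝ := dist P A + dist P B + dist P C

theorem norm_add_add_sq_le {R : ℝ} {A B C : E} (hA : ‖A‖ = R) (hB : ‖B‖ = R) (hC : ‖C‖ = R) :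
    ‖A + B + C‖ ^ 2 ≤ 6 * R * (3 * R - distSum A B C ((1 / 3 : ℝ) • (A + B + C))) := by
  set P := (1 / 3 : ℝ) • (A + B + C)
  -- `2 R |PX| ≤ R² + |PX|²`, and `|PX|² = R² + ‖P‖² - 2 ⟪P, X⟫`
  have htest : ∀ X : E, ‖X‖ = R → 2 * R * dist P X ≤ 2 * R ^ 2 + ‖P‖ ^ 2 - 2 * ⟪P, X⟫ := by
    intro X hX
    have := norm_sub_sq_real P X
    rw [← dist_eq_norm, hX] at this
    nlinarith [two_mul_le_add_sq R (dist P X)]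
  have hP : ‖P‖ ^ 2 = ‖A + B + C‖ ^ 2 / 9 := by
    rw [norm_smul, mul_pow, Real.norm_eq_abs, sq_abs]
    ring
  have hinner : ⟪P, A⟫ + ⟪P, B⟫ + ⟪P, C⟫ = ‖A + B + C‖ ^ 2 / 3 := by
    rw [← inner_add_right, ← inner_add_right, real_inner_smul_left, real_inner_self_eq_norm_sq]
    ring
  unfold distSum
  linarith [htest A hA, htest B hB, htest C hC]

theorem norm_sq_le_of_isMinOn_distSum {R : ℝ} {A B C D : E} (hR : 0 < R)
    (hA : ‖A‖ = R) (hB : ‖B‖ = R) (hC : ‖C‖ = R) (hD : ‖D‖ ≤ R)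
    (hmin : IsMinOn (distSum A B C) (closedBall 0 R) D) :
    ‖D‖ ^ 2 ≤ 24 * R * (3 * R - distSum A B C D) := by
  rw [isMinOn_iff] at hmin
  set g := 3 * R - distSum A B C D with hg
  set Q := (‖D‖ ^ 2 * R ^ 2 - ⟪D, A⟫ ^ 2) + (‖D‖ ^ 2 * R ^ 2 - ⟪D, B⟫ ^ 2)
    + (‖D‖ ^ 2 * R ^ 2 - ⟪D, C⟫ ^ 2) with hQ_def
  have hQ : Q ≤ 12 * R ^ 3 * g := by
    have hhalf := hmin ((1 / 2 : ℝ) • D) <| mem_closedBall_zero_iff.2 <| by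
      rw [norm_smul, Real.norm_of_nonneg (by norm_num)]
      linarith [norm_nonneg D]
    simp only [distSum] at hhalf hg
    rw [hg]
    linarith [mul_le_mul_of_nonneg_left hhalf (by positivity : (0 : ℝ) ≤ 12 * R ^ 3),
      norm_sq_mul_sq_sub_inner_sq_le_midpoint_defect hD hA,
      norm_sq_mul_sq_sub_inner_sq_le_midpoint_defect hD hB,
      norm_sq_mul_sq_sub_inner_sq_le_midpoint_defect hD hC]
  have hS : ‖A + B + C‖ ^ 2 ≤ 6 * R * g := by
    have hthird := hmin ((1 / 3 : ℝ) • (A + B + C)) <| mem_closedBall_zero_iff.2 <| by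
      rw [norm_smul, Real.norm_of_nonneg (by norm_num)]
      linarith [norm_add₃_le (a := A) (b := B) (c := C)]
    nlinarith [norm_add_add_sq_le hA hB hC]
  -- if `Q` is small, `A`, `B`, `C` are nearly collinear with `D`, so `A + B + C` is long
  have hcollinear : ‖D‖ ^ 2 * R ^ 2 - Q ≤ ‖D‖ ^ 2 * R * ‖A + B + C‖ := by
    have hX : ∀ X : E, ‖X‖ = R → |⟪D, X⟫| ≤ ‖D‖ * R := fun X hX =>
      hX ▸ abs_real_inner_le_norm D X
    have hsq := sq_add_sq_add_sq_le_mul_abs_add_add (hX A hA) (hX B hB) (hX C hC)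
    rw [← inner_add_right, ← inner_add_right] at hsq
    have hDS := mul_le_mul_of_nonneg_left (abs_real_inner_le_norm D (A + B + C))
      (mul_nonneg (norm_nonneg D) hR.le)
    linarith
  by_contra! hsmall
  have hRS : R < 2 * ‖A + B + C‖ := by
    have hQ' : Q < ‖D‖ ^ 2 * R ^ 2 / 2 := by
      nlinarith [mul_lt_mul_of_pos_left hsmall (by positivity : (0 : ℝ) < R ^ 2)]
    have : ‖D‖ ^ 2 * R * R < ‖D‖ ^ 2 * R * (2 * ‖A + B + C‖) := by linarith
    exact lt_of_mul_lt_mul_left this (by positivity)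
  nlinarith [norm_nonneg D]

end InnerProductSpace

theorem statement11_general (τ : ℝ) (hτ0 : 0 < τ) :
    ∃ μ : ℝ, 0 < μ ∧
      ∀ R : ℝ, 0 < R → ∀ A B C : ℂ,
        ‖A‖ = R → ‖B‖ = R → ‖C‖ = R →
        ∀ D ∈ closedBall (0 : ℂ) R,
          (∀ P ∈ closedBall (0 : ℂ) R,
            dist D A + dist D B + dist D C ≤ dist P A + dist P B + dist P C) →
          τ * R ≤ ‖D‖ →
          dist D A + dist D B + dist D C < (3 - μ) * R := by
  refine ⟨τ ^ 2 / 25, by positivity, ?_⟩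
  intro R hR A B C hA hB hC D hD hmin hτD
  have hgain := norm_sq_le_of_isMinOn_distSum hR hA hB hC (mem_closedBall_zero_iff.1 hD)
    (isMinOn_iff.2 hmin)
  have hτD2 : (τ * R) ^ 2 ≤ ‖D‖ ^ 2 := pow_le_pow_left₀ (by positivity) hτD 2
  unfold distSum at hgain
  nlinarith [mul_pos (mul_pos hτ0 hτ0) hR]

/-- if the Fermat point of three points on `∂B_R` within the closed disk is
at distance at least `τR` from the center, then the minimal total distance is at most
`(3 - μ)R` with `μ > 0` of order `τ²`. -/
theorem statement11 (τ : ℝ) (hτ0 : 0 < τ) (hτ : τ ≤ 1 / 100) :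
    ∃ μ : ℝ, 0 < μ ∧
      ∀ R : ℝ, 0 < R → ∀ A B C : ℂ,
        ‖A‖ = R → ‖B‖ = R → ‖C‖ = R →
        ∀ D ∈ closedBall (0 : ℂ) R,
          (∀ P ∈ closedBall (0 : ℂ) R,
            dist D A + dist D B + dist D C ≤ dist P A + dist P B + dist P C) →
          τ * R ≤ ‖D‖ →
          dist D A + dist D B + dist D C < (3 - μ) * R :=
  statement11_general τ hτ0
end
end

section
/- Let x_B' < x_D < x_C' and y_A' > y_D > max(y_B', y_C') be real numbers satisfying (y_B' − y_D)/(x_B' − x_D) = 1/√3 and (y_C' − y_D)/(x_C' − x_D) = −1/√3, and define f(y) := (y_A' − y) + √((x_C' − x_B')² + (2y − y_B' − y_C')²). Suppose R > 0 is such that x_C' − x_B' ≥ cR for some c > 0 and |x_B'|, |x_C'|, |y_A'|, |y_B'|, |y_C'| ≤ 2R. Then there exists a constant C depending only on c such that for every η > 0 and every y ∈ (max(y_B', y_C'), y_A') with f(y) ≤ f(y_D) + η, one has |y − y_D| ≤ C√(ηR). -/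
open MeasureTheory Metric Filter
open scoped RealInnerProductSpace

noncomputable section

set_option maxHeartbeats 1000000 in
/-- quantitative stability of the minimizer `y_D` of
`f(y) = (y_A' - y) + √((x_C' - x_B')² + (2y - y_B' - y_C')²)`:
almost-minimizers are `C√(ηR)`-close to `y_D`. -/
theorem statement13 (c : ℝ) (hc : 0 < c) :
    ∃ C : ℝ, ∀ xB xC xD yA yB yC yD R : ℝ,
      xB < xD → xD < xC → max yB yC < yD → yD < yA →
      Real.sqrt 3 * (yB - yD) = xB - xD →
      Real.sqrt 3 * (yC - yD) = -(xC - xD) →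
      0 < R → c * R ≤ xC - xB →
      |xB| ≤ 2 * R → |xC| ≤ 2 * R → |yA| ≤ 2 * R → |yB| ≤ 2 * R → |yC| ≤ 2 * R →
      ∀ η : ℝ, 0 < η → ∀ y : ℝ, max yB yC < y → y < yA →
        (yA - y) + Real.sqrt ((xC - xB) ^ 2 + (2 * y - yB - yC) ^ 2) ≤
          (yA - yD) + Real.sqrt ((xC - xB) ^ 2 + (2 * yD - yB - yC) ^ 2) + η →
        |y - yD| ≤ C * Real.sqrt (η * R) := by
  refine ⟨Real.sqrt (784 / (3 * c)), ?_⟩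
  intro xB xC xD yA yB yC yD R hBD hDC hmxD hDA hslB hslC hR hcR hxB hxC hyA hyB hyC η hη y hmy hyA' hf
  have h3 : (Real.sqrt 3) ^ 2 = 3 := Real.sq_sqrt (by norm_num)
  have h3pos : (0:ℝ) < Real.sqrt 3 := Real.sqrt_pos.2 (by norm_num)
  have h3le : Real.sqrt 3 ≤ 2 := by nlinarith [h3, h3pos]
  set L := xC - xB with hLdef
  set s := 2 * y - yB - yC with hsdef
  set s0 := 2 * yD - yB - yC with hs0def
  have hL : L = Real.sqrt 3 * s0 := by rw [hLdef, hs0def]; linarith [hslB, hslC]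
  have hLpos : 0 < L := by rw [hLdef]; linarith
  have hs0pos : 0 < s0 := by nlinarith [hL, h3pos, hLpos]
  have hspos : 0 < s := by
    have h1 : yB ≤ max yB yC := le_max_left _ _
    have h2 : yC ≤ max yB yC := le_max_right _ _
    rw [hsdef]; linarith
  -- bounds
  have hsub : s ≤ 8 * R := by
    have := abs_le.1 hyB; have := abs_le.1 hyC; have := abs_le.1 hyA
    rw [hsdef]; linarith
  have hs0ub : s0 ≤ 8 * R := by
    have := abs_le.1 hyB; have := abs_le.1 hyC; have := abs_le.1 hyA
    rw [hs0def]; linarith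
  have hLub : L ≤ 4 * R := by
    have := abs_le.1 hxB; have := abs_le.1 hxC
    rw [hLdef]; linarith
  have hyD : y - yD = (s - s0) / 2 := by rw [hsdef, hs0def]; ring
  clear_value L s s0
  clear hsdef hs0def hLdef hslB hslC hBD hDC hmxD hDA hmy hxB hxC hyA hyB hyC
  set a := Real.sqrt (L ^ 2 + s ^ 2) with hadef
  have ha0 : 0 ≤ a := Real.sqrt_nonneg _
  have ha2 : a ^ 2 = L ^ 2 + s ^ 2 := Real.sq_sqrt (by positivity)
  have haub : a ≤ 12 * R := by
    have h1 : L ^ 2 + s ^ 2 ≤ (12 * R) ^ 2 := by nlinarith [hLub, hsub, hLpos, hspos]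
    calc a ≤ Real.sqrt ((12 * R) ^ 2) := Real.sqrt_le_sqrt h1
    _ = 12 * R := Real.sqrt_sq (by linarith)
  -- sqrt(L^2+s0^2) = 2*s0
  have hb : Real.sqrt (L ^ 2 + s0 ^ 2) = 2 * s0 := by
    have : L ^ 2 + s0 ^ 2 = (2 * s0) ^ 2 := by rw [hL]; linear_combination s0 ^ 2 * h3
    rw [this, Real.sqrt_sq (by linarith)]
  rw [hb] at hf
  -- hf : yA - y + a ≤ yA - yD + 2 * s0 + η
  -- key identity
  have hkey : 2 * (a - 2 * s0 - (s - s0) / 2) * ((a + 2 * s0) * (2 * s + a)) =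
      3 * (s - s0) ^ 2 * (s + s0) := by
    have hL2 : L ^ 2 = 3 * s0 ^ 2 := by rw [hL]; linear_combination s0 ^ 2 * h3
    have ha2' : a ^ 2 = 3 * s0 ^ 2 + s ^ 2 := by rw [ha2, hL2]
    linear_combination (4 * s + 2 * a - s + s0) * ha2'
  have heta : a - 2 * s0 - (s - s0) / 2 ≤ η := by rw [← hyD]; linarith [hf]
  clear_value a
  have h2s0 : c * R ≤ 2 * s0 := by
    nlinarith [hcR, hL, mul_nonneg (by linarith : (0:ℝ) ≤ 2 - Real.sqrt 3) hs0pos.le]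
  have hD : (a + 2 * s0) * (2 * s + a) ≤ 784 * R ^ 2 := by nlinarith [haub, hsub, hs0ub, ha0, hspos, hs0pos, hR]
  have hDpos : (0:ℝ) ≤ (a + 2 * s0) * (2 * s + a) := by positivity
  have hq : 3 * (s - s0) ^ 2 * (s + s0) ≤ 1568 * η * R ^ 2 := by
    nlinarith [hkey, heta, hD, hDpos, hη]
  have hsq : s0 * (s - s0) ^ 2 = s0 * (4 * (y - yD) ^ 2) := by
    have : (s - s0) ^ 2 = 4 * (y - yD) ^ 2 := by rw [hyD]; ring
    rw [this]
  have hq' : 12 * s0 * (y - yD) ^ 2 ≤ 1568 * η * R ^ 2 := by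
    nlinarith [hq, hsq, mul_nonneg hspos.le (sq_nonneg (s - s0))]
  have h5 : (y - yD) ^ 2 ≤ 784 / (3 * c) * (η * R) := by
    rw [div_mul_eq_mul_div, le_div_iff₀ (by positivity : (0:ℝ) < 3 * c)]
    have h6 : ((y - yD) ^ 2 * (3 * c)) * (2 * R) ≤ (784 * (η * R)) * (2 * R) := by
      nlinarith [hq', mul_nonneg (by linarith : (0:ℝ) ≤ 2 * s0 - c * R) (sq_nonneg (y - yD))]
    exact le_of_mul_le_mul_right h6 (by positivity)
  calc |y - yD| = Real.sqrt ((y - yD) ^ 2) := (Real.sqrt_sq_eq_abs _).symm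
  _ ≤ Real.sqrt (784 / (3 * c) * (η * R)) := Real.sqrt_le_sqrt h5
  _ = Real.sqrt (784 / (3 * c)) * Real.sqrt (η * R) := Real.sqrt_mul (by positivity) _

end
end

section
/- Let x_B' < x_D < x_C' and y_A' > y_D > max(y_B', y_C') be real numbers satisfying (y_B' − y_D)/(x_B' − x_D) = 1/√3 and (y_C' − y_D)/(x_C' − x_D) = −1/√3, and define f(y) := (y_A' − y) + √((x_C' − x_B')² + (2y − y_B' − y_C')²). Then f is strictly convex, y = y_D is its unique critical point and unique global minimizer on any interval (y_C' + d, y_A' − d) containing y_D, and the minimum value is f(y_D) = |D'A'| + |D'B'| + |D'C'|, where D' = (x_D, y_D), A' = (x_D, y_A'), B' = (x_B', y_B'), C' = (x_C', y_C') and |·| denotes Euclidean distance in ℝ². -/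
/-!
With `a = x_C' - x_B' ≠ 0` and `t = 2y - y_B' - y_C'`, the derivative of `f` is
`-1 + 2 t / √(a² + t²)`, and `t ↦ t / √(a² + t²)` is strictly increasing, so `f` is strictly
convex. The slope conditions make `D'B'` and `D'C'` hypotenuses of 30-60-90 triangles with
vertical legs `y_D - y_B'` and `y_D - y_C'`; summing the horizontal legs gives `a = √3 t` at
`y = y_D`, hence `√(a² + t²) = 2t` there, which is exactly `f'(y_D) = 0`, and the same identity
turns `|D'B'|` and `|D'C'|` into twice their vertical legs.
-/

open MeasureTheory Metric Filter
open scoped RealInnerProductSpace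

noncomputable section

open Set

theorem hasDerivAt_sqrt_sq_add_sq {a : ℝ} (ha : a ≠ 0) (t : ℝ) :
    HasDerivAt (fun t => √(a ^ 2 + t ^ 2)) (t / √(a ^ 2 + t ^ 2)) t := by
  have hq : a ^ 2 + t ^ 2 ≠ 0 := by positivity
  convert ((hasDerivAt_pow 2 t).const_add (a ^ 2)).sqrt hq using 1
  field_simp
  ring

theorem strictMono_div_sqrt_sq_add_sq {a : ℝ} (ha : a ≠ 0) :
    StrictMono fun t => t / √(a ^ 2 + t ^ 2) := by
  refine strictMono_of_hasDerivAt_pos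
    (f' := fun t => a ^ 2 / (√(a ^ 2 + t ^ 2) ^ 2 * √(a ^ 2 + t ^ 2))) (fun t => ?_)
    (fun t => by positivity)
  have hs : √(a ^ 2 + t ^ 2) ≠ 0 := by positivity
  refine ((hasDerivAt_id' t).div (hasDerivAt_sqrt_sq_add_sq ha t) hs).congr_deriv ?_
  field_simp
  rw [Real.sq_sqrt (by positivity)]
  ring

theorem sqrt_sq_add_sq_of_abs_eq_sqrt_three_mul {x t : ℝ} (h : |x| = √3 * t) :
    √(x ^ 2 + t ^ 2) = 2 * t := by
  have ht : 0 ≤ t := (mul_nonneg_iff_of_pos_left (by positivity)).mp (h ▸ abs_nonneg x)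
  rw [← sq_abs, h, mul_pow, Real.sq_sqrt zero_le_three,
    show 3 * t ^ 2 + t ^ 2 = (2 * t) ^ 2 by ring, Real.sqrt_sq (by positivity)]

theorem StrictConvexOn.injective_deriv {f : ℝ → ℝ} (hf : StrictConvexOn ℝ univ f)
    (hd : Differentiable ℝ f) : Function.Injective (deriv f) :=
  injOn_univ.mp (hf.strictMonoOn_deriv fun x _ => hd x).injOn

theorem StrictConvexOn.lt_of_hasDerivAt_zero {f : ℝ → ℝ} {x y : ℝ}
    (hf : StrictConvexOn ℝ univ f) (hx : HasDerivAt f 0 x) (hxy : y ≠ x) : f x < f y := by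
  rcases hxy.lt_or_gt with h | h
  · have := hf.slope_lt_deriv (mem_univ y) (mem_univ x) h hx.differentiableAt
    rw [hx.deriv, slope_def_field, div_neg_iff] at this
    rcases this with ⟨-, h'⟩ | ⟨h', -⟩ <;> linarith
  · have := hf.deriv_lt_slope (mem_univ x) (mem_univ y) h hx.differentiableAt
    rw [hx.deriv, slope_def_field, div_pos_iff] at this
    rcases this with ⟨h', -⟩ | ⟨-, h'⟩ <;> linarith

section

variable {a : ℝ} (c p q : ℝ)

theorem hasDerivAt_sub_add_sqrt (ha : a ≠ 0) (y : ℝ) :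
    HasDerivAt (fun y => (c - y) + √(a ^ 2 + (2 * y - p - q) ^ 2))
      (-1 + 2 * ((2 * y - p - q) / √(a ^ 2 + (2 * y - p - q) ^ 2))) y := by
  have hlin : HasDerivAt (fun y : ℝ => 2 * y - p - q) 2 y := by
    simpa using (((hasDerivAt_id y).const_mul 2).sub_const p).sub_const q
  refine ((hasDerivAt_id y).const_sub c).add ?_
  exact ((hasDerivAt_sqrt_sq_add_sq ha _).comp y hlin).congr_deriv (mul_comm _ _)

theorem strictConvexOn_sub_add_sqrt (ha : a ≠ 0) :
    StrictConvexOn ℝ univ fun y => (c - y) + √(a ^ 2 + (2 * y - p - q) ^ 2) := by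
  refine StrictMono.strictConvexOn_univ_of_deriv (by fun_prop) ?_
  rw [funext fun y => (hasDerivAt_sub_add_sqrt c p q ha y).deriv]
  intro y z hyz
  have := strictMono_div_sqrt_sq_add_sq ha (show 2 * y - p - q < 2 * z - p - q by linarith)
  dsimp only at this ⊢
  linarith

end

/-- the function
`f(y) = (y_A' - y) + √((x_C' - x_B')² + (2y - y_B' - y_C')²)` is strictly convex, `y_D`
is its unique critical point and the unique minimizer on any interval
`(y_C' + d, y_A' - d)` containing `y_D`, and `f(y_D) = |D'A'| + |D'B'| + |D'C'|`. -/
theorem statement14 (xB xC xD yA yB yC yD : ℝ)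
    (h1 : xB < xD) (h2 : xD < xC) (h3 : max yB yC < yD) (h4 : yD < yA)
    (hB : Real.sqrt 3 * (yB - yD) = xB - xD)
    (hC : Real.sqrt 3 * (yC - yD) = -(xC - xD)) :
    StrictConvexOn ℝ Set.univ
      (fun y : ℝ => (yA - y) + Real.sqrt ((xC - xB) ^ 2 + (2 * y - yB - yC) ^ 2)) ∧
    deriv (fun y : ℝ => (yA - y) + Real.sqrt ((xC - xB) ^ 2 + (2 * y - yB - yC) ^ 2)) yD
      = 0 ∧
    (∀ y : ℝ,
      deriv (fun y : ℝ => (yA - y) + Real.sqrt ((xC - xB) ^ 2 + (2 * y - yB - yC) ^ 2)) y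
        = 0 → y = yD) ∧
    (∀ d y : ℝ, yC + d < yD → yD < yA - d → y ∈ Set.Ioo (yC + d) (yA - d) → y ≠ yD →
      (yA - yD) + Real.sqrt ((xC - xB) ^ 2 + (2 * yD - yB - yC) ^ 2) <
        (yA - y) + Real.sqrt ((xC - xB) ^ 2 + (2 * y - yB - yC) ^ 2)) ∧
    (yA - yD) + Real.sqrt ((xC - xB) ^ 2 + (2 * yD - yB - yC) ^ 2) =
      dist (⟨xD, yD⟩ : ℂ) (⟨xD, yA⟩ : ℂ) + dist (⟨xD, yD⟩ : ℂ) (⟨xB, yB⟩ : ℂ)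
        + dist (⟨xD, yD⟩ : ℂ) (⟨xC, yC⟩ : ℂ) := by
  have ha : xC - xB ≠ 0 := (sub_pos.2 (h1.trans h2)).ne'
  have hyB : yB < yD := (le_max_left _ _).trans_lt h3
  have hyC : yC < yD := (le_max_right _ _).trans_lt h3
  have hsqrt : √((xC - xB) ^ 2 + (2 * yD - yB - yC) ^ 2) = 2 * (2 * yD - yB - yC) :=
    sqrt_sq_add_sq_of_abs_eq_sqrt_three_mul (by rw [abs_of_pos (by linarith)]; linarith)
  have hconv := strictConvexOn_sub_add_sqrt yA yB yC ha
  have hderiv := hasDerivAt_sub_add_sqrt yA yB yC ha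
  have hcrit :
      HasDerivAt (fun y => (yA - y) + √((xC - xB) ^ 2 + (2 * y - yB - yC) ^ 2)) 0 yD := by
    convert hderiv yD using 1
    rw [hsqrt, div_mul_cancel_right₀ (by linarith)]
    norm_num
  have hDA : dist (⟨xD, yD⟩ : ℂ) ⟨xD, yA⟩ = yA - yD := by
    rw [Complex.dist_of_re_eq (z := ⟨xD, yD⟩) (w := ⟨xD, yA⟩) rfl, Real.dist_eq,
      abs_of_neg (sub_neg.2 h4), neg_sub]
  have hDB : dist (⟨xD, yD⟩ : ℂ) ⟨xB, yB⟩ = 2 * (yD - yB) :=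
    (Complex.dist_eq_re_im _ _).trans <|
      sqrt_sq_add_sq_of_abs_eq_sqrt_three_mul (by rw [abs_of_pos (by linarith)]; linarith)
  have hDC : dist (⟨xD, yD⟩ : ℂ) ⟨xC, yC⟩ = 2 * (yD - yC) :=
    (Complex.dist_eq_re_im _ _).trans <|
      sqrt_sq_add_sq_of_abs_eq_sqrt_three_mul (by rw [abs_of_neg (by linarith)]; linarith)
  refine ⟨hconv, hcrit.deriv, fun y hy => ?_, fun d y _ _ _ hy => ?_, ?_⟩
  · exact hconv.injective_deriv (fun y => (hderiv y).differentiableAt) (hy.trans hcrit.deriv.symm)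
  · exact hconv.lt_of_hasDerivAt_zero hcrit hy
  · rw [hsqrt, hDA, hDB, hDC]
    ring
end
end

section
/- In the setting of the interface localization (diffuse interface within distance C'R₀^β of the triod T_{ABC}, and exponential decay |u(z) − a_i| ≤ K exp(−k(dist(z,∂𝒟_i) − C'R₀^β)⁺) on each region 𝒟_i), define the rescalings u_{R₀}(z) := u(R₀z) for z ∈ B̄₁, 𝒟^i_{R₀} := {z ∈ B₁ : R₀z ∈ 𝒟_i}, and the approximate triple junction map U_{R₀} := a₁χ_{𝒟¹_{R₀}} + a₂χ_{𝒟²_{R₀}} + a₃χ_{𝒟³_{R₀}} on B₁. Then there exists a constant C₁ depending only on W such that ∫_{B₁} |u_{R₀}(z) − U_{R₀}(z)| dz ≤ C₁ R₀^{β−1}. -/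
open MeasureTheory Metric Filter
open scoped RealInnerProductSpace

noncomputable section

/-!
Off the `2C'R₀^β`-neighbourhood of the triod and of `∂B_{R₀}`, the decay estimate bounds
`|u - a_i|` by `K e^{-kC'R₀^β}`, and `e^{-kC'R₀^β} = O(R₀^{β-1})` because `exp` beats every
power. Inside that neighbourhood, which is covered by three rectangles of size
`O(R₀) × O(R₀^β)` and an annulus of width `2C'R₀^β`, we only use `|u - a_i| ≤ K`; its area is
`O(R₀^{1+β})`. The triod itself is Lebesgue-null, so almost every point of `B_{R₀}` lies in some
`𝒟_i`, and rescaling to `B₁` divides the `L¹` norm by `R₀²`.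
-/

open Set

theorem exists_exp_neg_mul_rpow_le {c β : ℝ} (hc : 0 < c) (hβ : 0 < β) :
    ∃ C, ∀ R : ℝ, 1 ≤ R → Real.exp (-(c * R ^ β)) ≤ C * R ^ (β - 1) := by
  obtain ⟨n, hn⟩ := exists_nat_ge β⁻¹
  refine ⟨n.factorial / c ^ n, fun R hR => ?_⟩
  have hR₀ : 0 < R := by linarith
  -- `R ≤ R^{βn}`, and `exp x ≥ xⁿ / n!` at `x = c R^β`
  have hRpow : R ≤ (R ^ β) ^ n := by
    rw [← Real.rpow_natCast, ← Real.rpow_mul hR₀.le]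
    exact Real.self_le_rpow_of_one_le hR (by rw [inv_le_iff_one_le_mul₀ hβ] at hn; linarith)
  have hexp := Real.pow_div_factorial_le_exp (c * R ^ β) (by positivity) n
  rw [mul_pow, div_le_iff₀ (by positivity)] at hexp
  have hinv : R⁻¹ ≤ R ^ (β - 1) := by
    rw [← Real.rpow_neg_one]
    exact Real.rpow_le_rpow_of_exponent_le hR (by linarith)
  calc Real.exp (-(c * R ^ β)) ≤ n.factorial / c ^ n * R⁻¹ := by
        rw [Real.exp_neg, ← div_eq_mul_inv, inv_le_iff_one_le_mul₀ (Real.exp_pos _),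
          div_div, div_mul_eq_mul_div, le_div_iff₀ (by positivity), one_mul]
        nlinarith [mul_le_mul_of_nonneg_left hRpow (pow_pos hc n).le]
    _ ≤ n.factorial / c ^ n * R ^ (β - 1) := by gcongr

theorem setIntegral_le_mul_measureReal_add {α : Type*} [MeasurableSpace α] {μ : Measure α}
    {s E : Set α} {f : α → ℝ} {K ε : ℝ} (hs : μ s ≠ ⊤) (hE : MeasurableSet E) (hε : 0 ≤ ε)
    (hf₀ : ∀ x, 0 ≤ f x) (hfK : ∀ᵐ x ∂μ.restrict s, f x ≤ K)
    (hfε : ∀ᵐ x ∂μ.restrict s, x ∉ E → f x ≤ ε) :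
    ∫ x in s, f x ∂μ ≤ K * μ.real (s ∩ E) + ε * μ.real s := by
  have hint : IntegrableOn (fun _ => K) s μ := integrableOn_const hs
  calc ∫ x in s, f x ∂μ ≤ ∫ x in s, (E.indicator (fun _ => K) x + ε) ∂μ := by
        refine integral_mono_of_nonneg (.of_forall hf₀) ((hint.indicator hE).add
          (integrableOn_const hs)) ?_
        filter_upwards [hfK, hfε] with x hxK hxε
        by_cases hx : x ∈ E
        · simpa [hx] using hxK.trans (le_add_of_nonneg_right hε)
        · simpa [hx] using hxε hx
    _ = K * μ.real (s ∩ E) + ε * μ.real s := by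
        rw [integral_add (hint.indicator hE) (integrableOn_const hs), setIntegral_indicator hE,
          setIntegral_const, setIntegral_const, smul_eq_mul, smul_eq_mul, mul_comm, mul_comm ε]

theorem sum_indicator_const_of_mem {ι X M : Type*} [Fintype ι] [AddCommMonoid M]
    {𝒟 : ι → Set X} (hdisj : Pairwise fun i j => Disjoint (𝒟 i) (𝒟 j)) (a : ι → M)
    {i : ι} {z : X} (hz : z ∈ 𝒟 i) : ∑ j, (𝒟 j).indicator (fun _ => a j) z = a i := by
  rw [Finset.sum_eq_single i (fun j _ hji => indicator_of_notMem
    (disjoint_left.mp (hdisj hji.symm) hz) _) (by simp), indicator_of_mem hz]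

theorem exp_neg_mul_max_sub_le {k c x : ℝ} (hk : 0 ≤ k) (hx : 2 * c ≤ x) :
    Real.exp (-k * max (x - c) 0) ≤ Real.exp (-(k * c)) := by
  gcongr
  nlinarith [le_max_left (x - c) 0]

theorem norm_sub_sum_indicator_le {ι X E : Type*} [Fintype ι] [MetricSpace X]
    [PreconnectedSpace X] [NormedAddCommGroup E] {𝒟 : ι → Set X} {a : ι → E} {u : X → E}
    {S : Set X} {K k c : ℝ} (hK : 0 ≤ K) (hk : 0 ≤ k)
    (hdisj : Pairwise fun i j => Disjoint (𝒟 i) (𝒟 j)) (hne : ∀ i, 𝒟 i ≠ univ)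
    (hfront : ∀ i, frontier (𝒟 i) ⊆ S)
    (hdecay : ∀ i, ∀ z ∈ 𝒟 i,
      ‖u z - a i‖ ≤ K * Real.exp (-k * max (infDist z (frontier (𝒟 i)) - c) 0))
    {z : X} (hz : z ∈ ⋃ i, 𝒟 i) :
    ‖u z - ∑ i, (𝒟 i).indicator (fun _ => a i) z‖ ≤ K ∧
      (z ∉ thickening (2 * c) S →
        ‖u z - ∑ i, (𝒟 i).indicator (fun _ => a i) z‖ ≤ K * Real.exp (-(k * c))) := by
  obtain ⟨i, hi⟩ := mem_iUnion.mp hz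
  rw [sum_indicator_const_of_mem hdisj a hi]
  refine ⟨(hdecay i z hi).trans (mul_le_of_le_one_right hK (Real.exp_le_one_iff.mpr ?_)),
    fun hzS => (hdecay i z hi).trans (mul_le_mul_of_nonneg_left ?_ hK)⟩
  · exact mul_nonpos_of_nonpos_of_nonneg (neg_nonpos.mpr hk) (le_max_right _ _)
  · have hfr : (frontier (𝒟 i)).Nonempty := nonempty_frontier_iff.mpr ⟨⟨z, hi⟩, hne i⟩
    have hcS : 2 * c ≤ infDist z S :=
      not_lt.mp ((mem_thickening_iff_infDist_lt (hfr.mono (hfront i))).not.mp hzS)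
    exact exp_neg_mul_max_sub_le hk (hcS.trans (infDist_le_infDist_of_subset (hfront i) hfr))

theorem setIntegral_norm_sub_sum_indicator_le {ι X E : Type*} [Fintype ι] [MetricSpace X]
    [PreconnectedSpace X] [MeasurableSpace X] [OpensMeasurableSpace X] [NormedAddCommGroup E]
    {μ : Measure X} {𝒟 : ι → Set X} {a : ι → E} {u : X → E} {Ω Z S : Set X} {K k c : ℝ}
    (hK : 0 ≤ K) (hk : 0 ≤ k) (hΩ : MeasurableSet Ω) (hΩμ : μ Ω ≠ ⊤) (hΩu : Ω ≠ univ)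
    (hZ : μ Z = 0) (hdisj : Pairwise fun i j => Disjoint (𝒟 i) (𝒟 j))
    (hunion : ⋃ i, 𝒟 i = Ω \ Z) (hfront : ∀ i, frontier (𝒟 i) ⊆ S)
    (hdecay : ∀ i, ∀ z ∈ 𝒟 i,
      ‖u z - a i‖ ≤ K * Real.exp (-k * max (infDist z (frontier (𝒟 i)) - c) 0)) :
    ∫ z in Ω, ‖u z - ∑ i, (𝒟 i).indicator (fun _ => a i) z‖ ∂μ ≤
      K * μ.real (Ω ∩ thickening (2 * c) S) + K * Real.exp (-(k * c)) * μ.real Ω := by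
  have hne : ∀ i, 𝒟 i ≠ univ := fun i h => hΩu (eq_univ_of_univ_subset
    (h ▸ (subset_iUnion 𝒟 i).trans (hunion ▸ sdiff_subset)))
  have hmem : ∀ᵐ z ∂μ.restrict Ω, z ∈ ⋃ i, 𝒟 i := by
    filter_upwards [ae_restrict_mem hΩ, ae_restrict_of_ae (measure_eq_zero_iff_ae_notMem.mp hZ)]
      with z hzΩ hzZ
    exact hunion ▸ ⟨hzΩ, hzZ⟩
  have hbound := fun z (hz : z ∈ ⋃ i, 𝒟 i) =>
    norm_sub_sum_indicator_le (u := u) (S := S) (c := c) hK hk hdisj hne hfront hdecay hz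
  exact setIntegral_le_mul_measureReal_add hΩμ isOpen_thickening.measurableSet (by positivity)
    (fun _ => norm_nonneg _) (hmem.mono fun z hz => (hbound z hz).1)
    (hmem.mono fun z hz => (hbound z hz).2)

namespace Complex

theorem volume_segment (p q : ℂ) : volume (segment ℝ p q) = 0 := by
  refine measure_mono_null ?_ (Measure.addHaar_affineSubspace volume (affineSpan ℝ {p, q}) ?_)
  · rw [← convexHull_pair]
    exact convexHull_subset_affineSpan _
  · intro htop
    have h := (collinear_pair ℝ p q).finrank_le_one
    rw [← direction_affineSpan, htop, AffineSubspace.direction_top, finrank_top,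
      finrank_real_complex] at h
    omega

theorem volume_Icc_reProdIm_Icc (a b c d : ℝ) :
    volume (Icc a b ×ℂ Icc c d) = ENNReal.ofReal (b - a) * ENNReal.ofReal (d - c) := by
  have : Icc a b ×ℂ Icc c d = measurableEquivRealProd ⁻¹' (Icc a b ×ˢ Icc c d) := rfl
  rw [this, volume_preserving_equiv_real_prod.measure_preimage
    (measurableSet_Icc.prod measurableSet_Icc).nullMeasurableSet, Measure.volume_eq_prod,
    Measure.prod_prod, Real.volume_Icc, Real.volume_Icc]

theorem volume_thickening_segment_le (p q : ℂ) {t : ℝ} (ht : 0 ≤ t) :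
    volume (thickening t (segment ℝ p q)) ≤ ENNReal.ofReal ((dist p q + 2 * t) * (2 * t)) := by
  set L := dist p q
  set e : Circle := Circle.exp (arg (q - p))
  have hqp : q - p = L * e := by
    rw [Circle.coe_exp, show L = ‖q - p‖ from (dist_comm p q).trans (dist_eq_norm q p),
      norm_mul_exp_arg_mul_I]
  -- in the frame `z ↦ e⁻¹ (z - p)` the segment becomes `[0, L] ⊆ ℝ`
  set ψ : ℂ → ℂ := fun z => rotation e⁻¹ (z - p)
  have hψ : MeasurePreserving ψ volume volume :=
    (rotation e⁻¹).measurePreserving.comp (measurePreserving_sub_right volume p)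
  have hsub : thickening t (segment ℝ p q) ⊆
      ψ ⁻¹' (Icc (-t) (L + t) ×ℂ Icc (-t) t) := by
    intro z hz
    obtain ⟨w, hw, hzw⟩ := mem_thickening_iff.mp hz
    obtain ⟨θ, ⟨hθ0, hθ1⟩, rfl⟩ := (segment_eq_image' ℝ p q ▸ hw :)
    set η := rotation e⁻¹ (z - (p + θ • (q - p)))
    have hη : ‖η‖ < t := by simpa [η, dist_eq_norm, Circle.norm_coe] using hzw
    have hψz : ψ z = (θ * L : ℝ) + η := by
      simp only [ψ, η, map_sub, map_add, hqp, rotation_apply, real_smul]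
      push_cast
      field_simp
      ring
    have hre := (abs_le.mp ((abs_re_le_norm η).trans hη.le))
    have him := (abs_le.mp ((abs_im_le_norm η).trans hη.le))
    have hθL : θ * L ≤ L := mul_le_of_le_one_left dist_nonneg hθ1
    have hθL' : 0 ≤ θ * L := mul_nonneg hθ0 dist_nonneg
    simp only [mem_preimage, mem_reProdIm, mem_Icc, hψz, add_re, add_im, ofReal_re, ofReal_im]
    refine ⟨⟨?_, ?_⟩, ?_, ?_⟩ <;> linarith
  calc volume (thickening t (segment ℝ p q))
      ≤ volume (ψ ⁻¹' (Icc (-t) (L + t) ×ℂ Icc (-t) t)) := measure_mono hsub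
    _ = ENNReal.ofReal (L + t - -t) * ENNReal.ofReal (t - -t) := by
      rw [hψ.measure_preimage, volume_Icc_reProdIm_Icc]
      exact ((measurableSet_Icc.preimage measurable_re).inter
        (measurableSet_Icc.preimage measurable_im)).nullMeasurableSet
    _ = ENNReal.ofReal ((L + 2 * t) * (2 * t)) := by
      rw [← ENNReal.ofReal_mul (by linarith [dist_nonneg (x := p) (y := q)])]
      ring_nf

theorem volume_ball_diff_ball_le {R t : ℝ} (hR : 0 ≤ R) (ht : 0 ≤ t) :
    volume (ball (0 : ℂ) R \ ball 0 (R - t)) ≤ ENNReal.ofReal (2 * Real.pi * R * t) := by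
  rw [measure_sdiff_le_iff_le_add measurableSet_ball.nullMeasurableSet
    (ball_subset_ball (by linarith)) measure_ball_lt_top.ne, volume_ball, volume_ball,
    ← ENNReal.ofReal_coe_nnreal, NNReal.coe_real_pi, ← ENNReal.ofReal_pow hR,
    ← ENNReal.ofReal_mul (by positivity)]
  rcases le_total t R with htR | hRt
  · rw [← ENNReal.ofReal_pow (by linarith), ← ENNReal.ofReal_mul (by positivity),
      ← ENNReal.ofReal_add (by positivity) (by positivity)]
    exact ENNReal.ofReal_le_ofReal (by nlinarith [mul_nonneg Real.pi_pos.le (sq_nonneg t)])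
  · rw [ENNReal.ofReal_of_nonpos (show R - t ≤ 0 by linarith), zero_pow two_ne_zero, zero_mul,
      zero_add]
    exact ENNReal.ofReal_le_ofReal
      (by nlinarith [mul_le_mul_of_nonneg_left hRt hR, Real.pi_pos, sq_nonneg R])

theorem ball_inter_thickening_sphere_subset (R t : ℝ) :
    ball (0 : ℂ) R ∩ thickening t (sphere 0 R) ⊆ ball 0 R \ ball 0 (R - t) := by
  rintro w ⟨hwR, hw⟩
  refine ⟨hwR, fun hwt => ?_⟩
  obtain ⟨y, hy, hwy⟩ := mem_thickening_iff.mp hw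
  rw [mem_ball_zero_iff] at hwt
  rw [mem_sphere_zero_iff_norm] at hy
  linarith [norm_le_norm_add_norm_sub' y w, dist_eq_norm' w y]

theorem volume_real_ball (a : ℂ) {r : ℝ} (hr : 0 ≤ r) :
    volume.real (ball a r) = Real.pi * r ^ 2 := by
  rw [measureReal_def, volume_ball, ENNReal.toReal_mul, ENNReal.toReal_pow,
    ENNReal.toReal_ofReal hr, ENNReal.coe_toReal, NNReal.coe_real_pi, mul_comm]

theorem measureReal_ball_inter_thickening_triod_le {R t L : ℝ} (hR : 0 ≤ R) (ht : 0 ≤ t)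
    {D A B C : ℂ} (hA : dist D A ≤ L) (hB : dist D B ≤ L) (hC : dist D C ≤ L) :
    volume.real (ball (0 : ℂ) R ∩
        thickening t (segment ℝ D A ∪ segment ℝ D B ∪ segment ℝ D C ∪ sphere 0 R)) ≤
      3 * ((L + 2 * t) * (2 * t)) + 2 * Real.pi * R * t := by
  have hseg : ∀ P, dist D P ≤ L →
      volume.real (ball (0 : ℂ) R ∩ thickening t (segment ℝ D P)) ≤ (L + 2 * t) * (2 * t) :=
    fun P hP => ENNReal.toReal_le_of_le_ofReal (by nlinarith [dist_nonneg (x := D) (y := P)])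
      ((measure_mono inter_subset_right).trans ((volume_thickening_segment_le D P ht).trans
        (ENNReal.ofReal_le_ofReal (by gcongr))))
  have hsph : volume.real (ball (0 : ℂ) R ∩ thickening t (sphere 0 R)) ≤ 2 * Real.pi * R * t :=
    ENNReal.toReal_le_of_le_ofReal (by positivity)
      ((measure_mono (ball_inter_thickening_sphere_subset R t)).trans
        (volume_ball_diff_ball_le hR ht))
  simp only [thickening_union, inter_union_distrib_left]
  linarith [measureReal_union_le (μ := volume)
    (ball 0 R ∩ thickening t (segment ℝ D A) ∪ ball 0 R ∩ thickening t (segment ℝ D B) ∪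
      ball 0 R ∩ thickening t (segment ℝ D C)) (ball 0 R ∩ thickening t (sphere 0 R)),
    measureReal_union_le (μ := volume)
    (ball 0 R ∩ thickening t (segment ℝ D A) ∪ ball 0 R ∩ thickening t (segment ℝ D B))
      (ball 0 R ∩ thickening t (segment ℝ D C)),
    measureReal_union_le (μ := volume) (ball 0 R ∩ thickening t (segment ℝ D A))
      (ball 0 R ∩ thickening t (segment ℝ D B)), hseg A hA, hseg B hB, hseg C hC]

theorem setIntegral_unitBall_comp_smul (f : ℂ → ℝ) {R : ℝ} (hR : 0 < R) :
    ∫ z in ball (0 : ℂ) 1, f (R • z) = (R ^ 2)⁻¹ * ∫ w in ball (0 : ℂ) R, f w := by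
  rw [Measure.setIntegral_comp_smul_of_pos _ _ _ hR, smul_unitBall_of_pos hR,
    finrank_real_complex, smul_eq_mul]

theorem setIntegral_ball_norm_sub_sum_indicator_le_of_triod {E : Type*} [NormedAddCommGroup E]
    {a : Fin 3 → E} {u : ℂ → E} {R K k c : ℝ} (hR : 0 ≤ R) (hK : 0 ≤ K) (hk : 0 ≤ k)
    (hc : 0 ≤ c) {D A B C : ℂ} {𝒟 : Fin 3 → Set ℂ} (hD : ‖D‖ ≤ R) (hA : A ∈ sphere (0 : ℂ) R)
    (hB : B ∈ sphere (0 : ℂ) R) (hC : C ∈ sphere (0 : ℂ) R)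
    (hdisj : Pairwise fun i j => Disjoint (𝒟 i) (𝒟 j))
    (hunion : ⋃ i, 𝒟 i = ball (0 : ℂ) R \ (segment ℝ D A ∪ segment ℝ D B ∪ segment ℝ D C))
    (hfront : ∀ i, frontier (𝒟 i) ⊆
      segment ℝ D A ∪ segment ℝ D B ∪ segment ℝ D C ∪ sphere (0 : ℂ) R)
    (hdecay : ∀ i, ∀ z ∈ 𝒟 i,
      ‖u z - a i‖ ≤ K * Real.exp (-k * max (infDist z (frontier (𝒟 i)) - c) 0)) :
    ∫ w in ball (0 : ℂ) R, ‖u w - ∑ i, (𝒟 i).indicator (fun _ => a i) w‖ ≤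
      K * (3 * ((2 * R + 2 * (2 * c)) * (2 * (2 * c))) + 2 * Real.pi * R * (2 * c)) +
        K * Real.exp (-(k * c)) * (Real.pi * R ^ 2) := by
  have hdist : ∀ P ∈ sphere (0 : ℂ) R, dist D P ≤ 2 * R := fun P hP => by
    rw [mem_sphere_zero_iff_norm] at hP
    linarith [dist_le_norm_add_norm D P]
  have hT : volume (segment ℝ D A ∪ segment ℝ D B ∪ segment ℝ D C) = 0 :=
    measure_union_null (measure_union_null (volume_segment D A) (volume_segment D B))
      (volume_segment D C)
  rw [← volume_real_ball 0 hR]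
  refine (setIntegral_norm_sub_sum_indicator_le hK hk measurableSet_ball
    measure_ball_lt_top.ne (fun h => NormedSpace.unbounded_univ ℝ ℂ (h ▸ isBounded_ball)) hT
    hdisj hunion hfront hdecay).trans ?_
  gcongr
  exact measureReal_ball_inter_thickening_triod_le hR (by positivity) (hdist A hA) (hdist B hB)
    (hdist C hC)

end Complex

theorem statement16_general (a : Fin 3 → ℂ) (M K k C' β : ℝ)
    (hK : 0 < K) (hk : 0 < k) (hC' : 0 < C')
    (hβ0 : 0 < β) (hβ1 : β < 1) :
    ∃ C₁ : ℝ, ∀ R₀ : ℝ, 1 ≤ R₀ →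
      ∀ u : ℂ → ℂ, Differentiable ℝ u →
        (∀ z : ℂ, ‖u z‖ + Real.sqrt (gradSq u z) ≤ M) →
        ∀ (D A B C3 : ℂ) (𝒟 : Fin 3 → Set ℂ),
          ‖D‖ ≤ R₀ / 100 →
          A ∈ sphere (0 : ℂ) R₀ → B ∈ sphere (0 : ℂ) R₀ → C3 ∈ sphere (0 : ℂ) R₀ →
          (Pairwise fun i j => Disjoint (𝒟 i) (𝒟 j)) →
          (⋃ i, 𝒟 i) =
            ball (0 : ℂ) R₀ \ (segment ℝ D A ∪ segment ℝ D B ∪ segment ℝ D C3) →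
          (∀ i, frontier (𝒟 i) ⊆
            segment ℝ D A ∪ segment ℝ D B ∪ segment ℝ D C3 ∪ sphere (0 : ℂ) R₀) →
          (∀ i : Fin 3, ∀ z ∈ 𝒟 i,
            ‖u z - a i‖ ≤
              K * Real.exp (-k * max (Metric.infDist z (frontier (𝒟 i)) - C' * R₀ ^ β) 0)) →
          (∫ z in ball (0 : ℂ) 1,
              ‖u (R₀ • z) - ∑ i : Fin 3,
                Set.indicator {w : ℂ | R₀ • w ∈ 𝒟 i} (fun _ => a i) z‖) ≤
            C₁ * R₀ ^ (β - 1) := by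
  obtain ⟨Ct, hCt⟩ := exists_exp_neg_mul_rpow_le (mul_pos hk hC') hβ0
  refine ⟨K * (12 * C' * (2 + 4 * C') + 4 * Real.pi * C') + K * Real.pi * Ct, ?_⟩
  intro R₀ hR u _ _ D A B C3 𝒟 hD hA hB hC hdisj hunion hfront hdecay
  have hR₀ : 0 < R₀ := by linarith
  have hL1 := Complex.setIntegral_ball_norm_sub_sum_indicator_le_of_triod hR₀.le hK.le hk.le
    (by positivity : 0 ≤ C' * R₀ ^ β) (by linarith) hA hB hC hdisj hunion hfront hdecay
  have htail : Real.exp (-(k * (C' * R₀ ^ β))) ≤ Ct * R₀ ^ (β - 1) := by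
    rw [← mul_assoc]
    exact hCt R₀ hR
  have hRβ : R₀ ^ β = R₀ * R₀ ^ (β - 1) := by
    rw [Real.rpow_sub hR₀, Real.rpow_one]
    field_simp
  have hx1 : R₀ ^ (β - 1) ≤ 1 := Real.rpow_le_one_of_one_le_of_nonpos hR (by linarith)
  have hL1' := hL1.trans (add_le_add le_rfl
    (mul_le_mul_of_nonneg_right (mul_le_mul_of_nonneg_left htail hK.le) (by positivity)))
  refine (Complex.setIntegral_unitBall_comp_smul _ hR₀).trans_le
    ((mul_le_mul_of_nonneg_left hL1' (by positivity)).trans ?_)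
  rw [hRβ]
  field_simp
  nlinarith [mul_le_mul_of_nonneg_left hx1 (mul_nonneg hC'.le hC'.le)]

/-- `L¹`-closeness on the unit disk between the rescaling
`u_{R₀}(z) = u(R₀ z)` and the approximate triple junction map
`U_{R₀} = Σ_i a_i χ_{𝒟ⁱ_{R₀}}` determined by the triod `T_{ABC}`:
`∫_{B₁} |u_{R₀} - U_{R₀}| ≤ C₁ R₀^{β-1}`. -/
theorem statement16 (W : ℂ → ℝ) (a : Fin 3 → ℂ) (M c₁ c₂ K k C' β : ℝ)
    (hW : H1 W a M c₁ c₂) (hK : 0 < K) (hk : 0 < k) (hC' : 0 < C')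
    (hβ0 : 0 < β) (hβ1 : β < 1) :
    ∃ C₁ : ℝ, ∀ R₀ : ℝ, 1 ≤ R₀ →
      ∀ u : ℂ → ℂ, Differentiable ℝ u →
        (∀ z : ℂ, ‖u z‖ + Real.sqrt (gradSq u z) ≤ M) →
        ∀ (D A B C3 : ℂ) (𝒟 : Fin 3 → Set ℂ),
          ‖D‖ ≤ R₀ / 100 →
          A ∈ sphere (0 : ℂ) R₀ → B ∈ sphere (0 : ℂ) R₀ → C3 ∈ sphere (0 : ℂ) R₀ →
          (Pairwise fun i j => Disjoint (𝒟 i) (𝒟 j)) →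
          (⋃ i, 𝒟 i) =
            ball (0 : ℂ) R₀ \ (segment ℝ D A ∪ segment ℝ D B ∪ segment ℝ D C3) →
          (∀ i, frontier (𝒟 i) ⊆
            segment ℝ D A ∪ segment ℝ D B ∪ segment ℝ D C3 ∪ sphere (0 : ℂ) R₀) →
          (∀ i : Fin 3, ∀ z ∈ 𝒟 i,
            ‖u z - a i‖ ≤
              K * Real.exp (-k * max (Metric.infDist z (frontier (𝒟 i)) - C' * R₀ ^ β) 0)) →
          (∫ z in ball (0 : ℂ) 1,
              ‖u (R₀ • z) - ∑ i : Fin 3,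
                Set.indicator {w : ℂ | R₀ • w ∈ 𝒟 i} (fun _ => a i) z‖) ≤
            C₁ * R₀ ^ (β - 1) :=
  statement16_general a M K k C' β hK hk hC' hβ0 hβ1
end
end

section
/- Let a₁ ≠ a₂ ∈ ℝ² and γ ∈ (0, |a₁ − a₂|/2), so that no point of ℝ² is simultaneously within distance γ of both a₁ and a₂. Let β ∈ (0,1), C₀ > 0, and let R ≤ R' ≤ 4R with R sufficiently large (depending on β, C₀). Let u : ℝ² → ℝ² be continuous. Assume (coordinates chosen so the scale-R' junction is at the origin with a₁–a₂ interface along the positive y-axis): |u(x,y) − a₁| ≤ γ whenever (x,y) ∈ B_{R'}, x ≤ −C₀R'^β and y ≥ C₀R'^β; and |u(x,y) − a₂| ≤ γ whenever (x,y) ∈ B_{R'}, x ≥ C₀R'^β and y ≥ C₀R'^β. Assume further there are points D = (x_D, y_D) with |D| ≤ R/100 and A = (x_A, y_A) ∈ ∂B_R with y_A ≥ R/2 such that the analogous statements hold at scale R with respect to the segment DA: |u(z) − a₁| ≤ γ for z ∈ B_R lying on the left of the line through D and A at distance ≥ 3C₀R^β from it and at height y ≥ C₀R^β, and |u(z) −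 a₂| ≤ γ for the symmetric right-side region. Then |x_A − x_D| ≤ 48 C₀ R^β; consequently the angle θ between DA and the positive y-axis satisfies |θ| ≤ C R^{β−1} for a constant C depending only on C₀. -/
open MeasureTheory Metric Filter
open scoped RealInnerProductSpace

noncomputable section

/-! The interface at scale `R` is pinned by the phase regions of scale `R'`:
at heights `R/3` and `2R/3` the points `(± C₀R'^β, h)` lie in the `a₁`- resp. `a₂`-region of
scale `R'`, and since no value of `u` is `γ`-close to both wells they cannot lie in the
opposite region of scale `R`. These four constraints on the line `DA` force its horizontal
drift over a height `R/3` to be `O(R^β · R)`, i.e. `|x_A - x_D| = O(R^β)`; the angle bound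
follows from `arccos t ≤ (π/2) √(1 - t²)` on `[0, 1]`. -/

lemma Real.mul_rpow_le_self {K β R : ℝ} (hK : 0 ≤ K) (hβ : β < 1) (hR : 0 < R)
    (hKR : K ^ (1 - β)⁻¹ ≤ R) : K * R ^ β ≤ R := by
  have hK' : K ≤ R ^ (1 - β) := by
    calc K = (K ^ (1 - β)⁻¹) ^ (1 - β) := by
          rw [← Real.rpow_mul hK, inv_mul_cancel₀ (by linarith), Real.rpow_one]
      _ ≤ R ^ (1 - β) := Real.rpow_le_rpow (by positivity) hKR (by linarith)
  calc K * R ^ β ≤ R ^ (1 - β) * R ^ β := by gcongr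
    _ = R := by rw [← Real.rpow_add hR, sub_add_cancel, Real.rpow_one]

lemma Real.rpow_le_mul_rpow_of_le_mul {x y k β : ℝ} (hx : 0 ≤ x) (hk : 1 ≤ k)
    (hxy : x ≤ k * y) (hβ0 : 0 ≤ β) (hβ1 : β ≤ 1) : x ^ β ≤ k * y ^ β := by
  have hy : 0 ≤ y := nonneg_of_mul_nonneg_right (hx.trans hxy) (by linarith)
  calc x ^ β ≤ (k * y) ^ β := Real.rpow_le_rpow hx hxy hβ0
    _ = k ^ β * y ^ β := Real.mul_rpow (by linarith) hy
    _ ≤ k * y ^ β := by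
      gcongr
      simpa using Real.rpow_le_rpow_of_exponent_le hk hβ1

lemma Real.arccos_le_pi_div_two_mul_sqrt {x : ℝ} (hx : 0 ≤ x) :
    Real.arccos x ≤ Real.pi / 2 * Real.sqrt (1 - x ^ 2) := by
  have hsin := Real.mul_le_sin (Real.arccos_nonneg x) (Real.arccos_le_pi_div_two.mpr hx)
  rw [Real.sin_arccos, div_mul_eq_mul_div, div_le_iff₀ Real.pi_pos] at hsin
  nlinarith [Real.pi_pos]

lemma Complex.angle_I_le {v : ℂ} (hv : v ≠ 0) (him : 0 ≤ v.im) :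
    InnerProductGeometry.angle v Complex.I ≤ Real.pi / 2 * (|v.re| / ‖v‖) := by
  have hnorm : 0 < ‖v‖ := norm_pos_iff.mpr hv
  have hinner : ⟪v, Complex.I⟫ = v.im := by simp [Complex.inner]
  have hsq : ‖v‖ ^ 2 = v.re ^ 2 + v.im ^ 2 := by
    rw [Complex.sq_norm, Complex.normSq_apply]; ring
  have hsqrt : Real.sqrt (1 - (v.im / ‖v‖) ^ 2) = |v.re| / ‖v‖ := by
    rw [← Real.sqrt_sq (by positivity : 0 ≤ |v.re| / ‖v‖), div_pow, div_pow, sq_abs]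
    congr 1
    field_simp
    linarith
  rw [InnerProductGeometry.angle, hinner, Complex.norm_I, mul_one, ← hsqrt]
  exact Real.arccos_le_pi_div_two_mul_sqrt (by positivity)

lemma Complex.mk_mem_ball_zero {x y R : ℝ} (h : |x| + |y| < R) : (⟨x, y⟩ : ℂ) ∈ ball 0 R :=
  mem_ball_zero_iff.mpr ((Complex.norm_le_abs_re_add_abs_im _).trans_lt h)

lemma abs_re_mul_lt_of_cross2 {v D : ℂ} {c h₁ h₂ s : ℝ} (hc : 0 ≤ c)
    (hr₁ : cross2 v (⟨c, h₁⟩ - D) < s) (hr₂ : cross2 v (⟨c, h₂⟩ - D) < s)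
    (hl₁ : -s < cross2 v (⟨-c, h₁⟩ - D)) (hl₂ : -s < cross2 v (⟨-c, h₂⟩ - D)) :
    |v.re| * (h₂ - h₁) < 2 * s + 2 * c * |v.im| := by
  simp only [cross2, Complex.sub_re, Complex.sub_im] at hr₁ hr₂ hl₁ hl₂
  have hcim : c * v.im ≤ c * |v.im| := mul_le_mul_of_nonneg_left (le_abs_self _) hc
  rcases abs_cases v.re with ⟨hre, -⟩ | ⟨hre, -⟩ <;> rw [hre] <;> linarith

lemma abs_re_sub_le_of_interfaces {a₁ a₂ : ℂ} {γ R R' c P t : ℝ} {u : ℂ → ℂ} {D A : ℂ}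
    (hwells : Disjoint (closedBall a₁ γ) (closedBall a₂ γ)) (hRR' : R ≤ R')
    (hc : 0 < c) (hcP : c ≤ 4 * P) (hPR : 16 * P ≤ R)
    (hD : ‖D‖ ≤ R / 100) (hA : ‖A‖ = R)
    (h₁ : ∀ z ∈ ball (0 : ℂ) R', z.re ≤ -c → c ≤ z.im → ‖u z - a₁‖ ≤ γ)
    (h₂ : ∀ z ∈ ball (0 : ℂ) R', c ≤ z.re → c ≤ z.im → ‖u z - a₂‖ ≤ γ)
    (hDA₁ : ∀ z ∈ ball (0 : ℂ) R, t * ‖A - D‖ ≤ cross2 (A - D) (z - D) →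
      P ≤ z.im → ‖u z - a₁‖ ≤ γ)
    (hDA₂ : ∀ z ∈ ball (0 : ℂ) R, cross2 (A - D) (z - D) ≤ -(t * ‖A - D‖) →
      P ≤ z.im → ‖u z - a₂‖ ≤ γ)
    (ht : t ≤ 3 * P) :
    |A.re - D.re| ≤ 48 * P := by
  have hnear : ∀ z, ‖u z - a₁‖ ≤ γ → ‖u z - a₂‖ ≤ γ → False := fun z hz₁ hz₂ =>
    Set.disjoint_left.mp hwells (mem_closedBall_iff_norm.mpr hz₁)
      (mem_closedBall_iff_norm.mpr hz₂)
  have hmem : ∀ x h : ℝ, |x| = c → R / 3 ≤ h → h ≤ 2 * R / 3 →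
      (⟨x, h⟩ : ℂ) ∈ ball (0 : ℂ) R := fun x h hx hh₁ hh₂ =>
    Complex.mk_mem_ball_zero (by rw [hx, abs_of_pos (by linarith)]; linarith)
  have hright : ∀ h : ℝ, R / 3 ≤ h → h ≤ 2 * R / 3 →
      cross2 (A - D) (⟨c, h⟩ - D) < t * ‖A - D‖ := fun h hh₁ hh₂ => by
    by_contra! hcross
    have hz := hmem c h (abs_of_pos hc) hh₁ hh₂
    exact hnear _ (hDA₁ _ hz hcross (by dsimp only; linarith))
      (h₂ _ (ball_subset_ball hRR' hz) le_rfl (by dsimp only; linarith))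
  have hleft : ∀ h : ℝ, R / 3 ≤ h → h ≤ 2 * R / 3 →
      -(t * ‖A - D‖) < cross2 (A - D) (⟨-c, h⟩ - D) := fun h hh₁ hh₂ => by
    by_contra! hcross
    have hz := hmem (-c) h (by rw [abs_neg, abs_of_pos hc]) hh₁ hh₂
    exact hnear _ (h₁ _ (ball_subset_ball hRR' hz) le_rfl (by dsimp only; linarith))
      (hDA₂ _ hz hcross (by dsimp only; linarith))
  have hdrift := abs_re_mul_lt_of_cross2 hc.le (hright (R / 3) le_rfl (by linarith))
    (hright (2 * R / 3) (by linarith) le_rfl) (hleft (R / 3) le_rfl (by linarith))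
    (hleft (2 * R / 3) (by linarith) le_rfl)
  have hlen : ‖A - D‖ ≤ 101 / 100 * R := by linarith [norm_sub_le A D]
  have him : |(A - D).im| ≤ 101 / 100 * R := (Complex.abs_im_le_norm _).trans hlen
  have hP : 0 ≤ P := by linarith
  have hbound : |(A - D).re| * (R / 3) < 48 * P * (R / 3) := by
    calc |(A - D).re| * (R / 3) = |(A - D).re| * (2 * R / 3 - R / 3) := by ring
      _ < 2 * (t * ‖A - D‖) + 2 * c * |(A - D).im| := hdrift
      _ ≤ 2 * (3 * P * (101 / 100 * R)) + 2 * (4 * P) * (101 / 100 * R) := by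
        gcongr
      _ ≤ 48 * P * (R / 3) := by nlinarith
  rw [Complex.sub_re] at hbound
  exact (lt_of_mul_lt_mul_right hbound (by linarith)).le

theorem statement17_general (a₁ a₂ : ℂ) (γ β C₀ : ℝ)
    (hγ : γ < ‖a₁ - a₂‖ / 2)
    (hβ0 : 0 < β) (hβ1 : β < 1) (hC₀ : 0 < C₀) :
    ∃ C R₁ : ℝ, 0 < C ∧
      ∀ R R' : ℝ, R₁ ≤ R → R ≤ R' → R' ≤ 4 * R →
        ∀ u : ℂ → ℂ, Continuous u →
        (∀ z ∈ ball (0 : ℂ) R', z.re ≤ -(C₀ * R' ^ β) → C₀ * R' ^ β ≤ z.im →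
          ‖u z - a₁‖ ≤ γ) →
        (∀ z ∈ ball (0 : ℂ) R', C₀ * R' ^ β ≤ z.re → C₀ * R' ^ β ≤ z.im →
          ‖u z - a₂‖ ≤ γ) →
        ∀ D A : ℂ, ‖D‖ ≤ R / 100 → A ∈ sphere (0 : ℂ) R → R / 2 ≤ A.im →
        (∀ z ∈ ball (0 : ℂ) R, 3 * C₀ * R ^ β * ‖A - D‖ ≤ cross2 (A - D) (z - D) →
          C₀ * R ^ β ≤ z.im → ‖u z - a₁‖ ≤ γ) →
        (∀ z ∈ ball (0 : ℂ) R, cross2 (A - D) (z - D) ≤ -(3 * C₀ * R ^ β * ‖A - D‖) →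
          C₀ * R ^ β ≤ z.im → ‖u z - a₂‖ ≤ γ) →
        |A.re - D.re| ≤ 48 * C₀ * R ^ β ∧
        InnerProductGeometry.angle (A - D) Complex.I ≤ C * R ^ (β - 1) := by
  refine ⟨100 * C₀, (16 * C₀) ^ (1 - β)⁻¹, by positivity, ?_⟩
  intro R R' hR₁ hRR' hR'4 u _ h₁ h₂ D A hD hA hAim hDA₁ hDA₂
  have hR : 0 < R := lt_of_lt_of_le (by positivity) hR₁
  have hA' : ‖A‖ = R := mem_sphere_zero_iff_norm.mp hA
  have hwells : Disjoint (closedBall a₁ γ) (closedBall a₂ γ) :=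
    closedBall_disjoint_closedBall (by rw [dist_eq_norm]; linarith)
  have hscale : 16 * C₀ * R ^ β ≤ R := Real.mul_rpow_le_self (by positivity) hβ1 hR hR₁
  have hc : 0 < C₀ * R' ^ β := mul_pos hC₀ (Real.rpow_pos_of_pos (by linarith) β)
  have hc4 : C₀ * R' ^ β ≤ 4 * (C₀ * R ^ β) := by
    linarith [mul_le_mul_of_nonneg_left
      (Real.rpow_le_mul_rpow_of_le_mul (by linarith) (by norm_num) hR'4 hβ0.le hβ1.le) hC₀.le]
  have hre := abs_re_sub_le_of_interfaces hwells hRR' hc hc4 (by linarith) hD hA'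
    h₁ h₂ hDA₁ hDA₂ (by linarith)
  refine ⟨by linarith, ?_⟩
  have hlen : 99 / 100 * R ≤ ‖A - D‖ := by linarith [norm_sub_norm_le A D]
  have him : 0 ≤ (A - D).im := by
    rw [Complex.sub_im]; linarith [Complex.abs_im_le_norm D, le_abs_self D.im]
  calc InnerProductGeometry.angle (A - D) Complex.I
      ≤ Real.pi / 2 * (|(A - D).re| / ‖A - D‖) :=
        Complex.angle_I_le (norm_pos_iff.mp (by linarith)) him
    _ ≤ 2 * (48 * (C₀ * R ^ β) / (99 / 100 * R)) := by
        rw [Complex.sub_re]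
        gcongr
        linarith [Real.pi_le_four]
    _ ≤ 100 * C₀ * R ^ (β - 1) := by
        rw [Real.rpow_sub_one hR.ne']
        field_simp
        nlinarith [Real.rpow_pos_of_pos hR β]

/-- comparison of the interface directions at two consecutive scales
`R ≤ R' ≤ 4R`. If at scale `R'` the `a₁`–`a₂` interface is vertical through the origin
and at scale `R` it follows the segment `DA`, then `|x_A - x_D| ≤ 48 C₀ R^β`, so the
angle `θ` between `DA` and the positive `y`-axis satisfies `|θ| ≤ C R^{β-1}`. -/
theorem statement17 (a₁ a₂ : ℂ) (γ β C₀ : ℝ)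
    (ha : a₁ ≠ a₂) (hγ0 : 0 < γ) (hγ : γ < ‖a₁ - a₂‖ / 2)
    (hβ0 : 0 < β) (hβ1 : β < 1) (hC₀ : 0 < C₀) :
    ∃ C R₁ : ℝ, 0 < C ∧
      ∀ R R' : ℝ, R₁ ≤ R → R ≤ R' → R' ≤ 4 * R →
        ∀ u : ℂ → ℂ, Continuous u →
        (∀ z ∈ ball (0 : ℂ) R', z.re ≤ -(C₀ * R' ^ β) → C₀ * R' ^ β ≤ z.im →
          ‖u z - a₁‖ ≤ γ) →
        (∀ z ∈ ball (0 : ℂ) R', C₀ * R' ^ β ≤ z.re → C₀ * R' ^ β ≤ z.im →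
          ‖u z - a₂‖ ≤ γ) →
        ∀ D A : ℂ, ‖D‖ ≤ R / 100 → A ∈ sphere (0 : ℂ) R → R / 2 ≤ A.im →
        (∀ z ∈ ball (0 : ℂ) R, 3 * C₀ * R ^ β * ‖A - D‖ ≤ cross2 (A - D) (z - D) →
          C₀ * R ^ β ≤ z.im → ‖u z - a₁‖ ≤ γ) →
        (∀ z ∈ ball (0 : ℂ) R, cross2 (A - D) (z - D) ≤ -(3 * C₀ * R ^ β * ‖A - D‖) →
          C₀ * R ^ β ≤ z.im → ‖u z - a₂‖ ≤ γ) →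
        |A.re - D.re| ≤ 48 * C₀ * R ^ β ∧
        InnerProductGeometry.angle (A - D) Complex.I ≤ C * R ^ (β - 1) :=
  statement17_general a₁ a₂ γ β C₀ hγ hβ0 hβ1 hC₀
end
end
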